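/- Let d ≥ 1 and let A be a real d×d matrix with operator norm ‖A‖ ≤ M. Let ε > 0 and assume that every eigenvalue λ ∈ ℂ of A (i.e., every element of the spectrum of A viewed as a complex matrix) satisfies dist(λ, ℝ₋) ≥ ε. Then there exists a constant C > 0 such that for all real t ≥ 0 the matrix I + t·A is invertible and ‖(1+t)·(I + t·A)⁻¹·(A − I)‖ ≤ C; that is, the matrix K(t) := (1+t)(I + tA)⁻¹(A − I) is bounded uniformly in t ≥ 0. -/

import Mathlib

/-!
Eigenvalues of the real matrix `A` that are real lie in `(0, ∞)`, so every point
`(1 - s) • 1 + s • A` of the segment from `1` to `A` is invertible. The substitution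
`s = t / (1 + t)` gives `(1 + t) (1 + t A)⁻¹ = ((1 - s) • 1 + s • A)⁻¹`, and this is bounded
for `s ∈ [0, 1]` because inversion is continuous on the units of a Banach algebra and the
segment is compact.
-/

open Set

theorem Matrix.map_mem_spectrum_map_iff {n K L : Type*} [Fintype n] [DecidableEq n]
    [Field K] [Field L] (f : K →+* L) (A : Matrix n n K) (r : K) :
    f r ∈ spectrum L (A.map f) ↔ r ∈ spectrum K A := by
  rw [Matrix.mem_spectrum_iff_isRoot_charpoly, Matrix.mem_spectrum_iff_isRoot_charpoly,
    Matrix.charpoly_map, Polynomial.isRoot_map_iff f.injective]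

theorem add_smul_eq_smul_lineMap {𝕜 E : Type*} [Field 𝕜] [AddCommGroup E] [Module 𝕜 E]
    (x y : E) {t : 𝕜}
    (ht : 1 + t ≠ 0) : x + t • y = (1 + t) • AffineMap.lineMap x y (t / (1 + t)) := by
  have h₀ : (1 + t) * (1 - t / (1 + t)) = 1 := by field_simp; ring
  have h₁ : (1 + t) * (t / (1 + t)) = t := by field_simp
  rw [AffineMap.lineMap_apply_module, smul_add, smul_smul, smul_smul, h₀, h₁, one_smul]

theorem Ring.inverse_smul_of_isUnit {𝕜 E : Type*} [Field 𝕜] [Ring E] [Module 𝕜 E]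
    [IsScalarTower 𝕜 E E] [SMulCommClass 𝕜 E E] {c : 𝕜} (hc : c ≠ 0) {x : E} (hx : IsUnit x) :
    Ring.inverse (c • x) = c⁻¹ • Ring.inverse x := by
  have hcx : IsUnit (c • x) := (isUnit_smul_iff (Units.mk0 c hc) x).mpr hx
  simpa using (Ring.inverse_mul_eq_iff_eq_mul (c • x) 1 (c⁻¹ • Ring.inverse x) hcx).mpr <| by
    rw [smul_mul_smul_comm, mul_inv_cancel₀ hc, one_smul, Ring.mul_inverse_cancel x hx]

section BanachAlgebra

variable {E : Type*} [NormedRing E] [NormedAlgebra ℝ E] {a : E}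

theorem isUnit_lineMap_one_of_spectrum_pos (ha : ∀ r ∈ spectrum ℝ a, 0 < r) {s : ℝ}
    (hs : s ∈ Icc (0 : ℝ) 1) : IsUnit (AffineMap.lineMap 1 a s) := by
  rcases hs.1.eq_or_lt with rfl | hs₀
  · simp
  have hr : -(1 - s) / s ∉ spectrum ℝ a := fun hr =>
    (ha _ hr).not_ge (div_nonpos_of_nonpos_of_nonneg (by linarith [hs.2]) hs₀.le)
  have hfactor : AffineMap.lineMap 1 a s = (-s) • (algebraMap ℝ E (-(1 - s) / s) - a) := by
    rw [AffineMap.lineMap_apply_module, Algebra.algebraMap_eq_smul_one, smul_sub, smul_smul]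
    field_simp
    simp [sub_eq_add_neg, add_comm]
  rw [hfactor]
  exact (isUnit_smul_iff (Units.mk0 (-s) (by linarith)) _).mpr (spectrum.notMem_iff.mp hr)

variable [CompleteSpace E]

theorem exists_norm_ringInverse_lineMap_one_le (ha : ∀ r ∈ spectrum ℝ a, 0 < r) :
    ∃ C, ∀ s ∈ Icc (0 : ℝ) 1, ‖Ring.inverse (AffineMap.lineMap (1 : E) a s)‖ ≤ C := by
  refine isCompact_Icc.exists_bound_of_continuousOn fun s hs => ?_
  obtain ⟨u, hu⟩ := isUnit_lineMap_one_of_spectrum_pos ha hs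
  have hinv : ContinuousAt Ring.inverse (AffineMap.lineMap (1 : E) a s) :=
    hu ▸ NormedRing.inverse_continuousAt u
  exact (hinv.comp AffineMap.lineMap_continuous.continuousAt).continuousWithinAt

theorem exists_norm_smul_ringInverse_one_add_smul_le (ha : ∀ r ∈ spectrum ℝ a, 0 < r) :
    ∃ C, ∀ t : ℝ, 0 ≤ t → IsUnit (1 + t • a) ∧ ‖(1 + t) • Ring.inverse (1 + t • a)‖ ≤ C := by
  obtain ⟨C, hC⟩ := exists_norm_ringInverse_lineMap_one_le ha
  refine ⟨C, fun t ht => ?_⟩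
  have ht₁ : 1 + t ≠ 0 := by positivity
  have hs : t / (1 + t) ∈ Icc (0 : ℝ) 1 :=
    ⟨by positivity, (div_le_one (by positivity)).mpr (by linarith)⟩
  have hunit := isUnit_lineMap_one_of_spectrum_pos ha hs
  rw [add_smul_eq_smul_lineMap 1 a ht₁, Ring.inverse_smul_of_isUnit ht₁ hunit, smul_smul,
    mul_inv_cancel₀ ht₁, one_smul]
  exact ⟨(isUnit_smul_iff (Units.mk0 _ ht₁) _).mpr hunit, hC _ hs⟩

end BanachAlgebra

open scoped Matrix.Norms.L2Operator

theorem K_uniformly_bounded_general (d : ℕ) (A : Matrix (Fin d) (Fin d) ℝ)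
    (ε : ℝ) (hε : 0 < ε)
    (hspec : ∀ lam ∈ spectrum ℂ (A.map Complex.ofReal),
      ε ≤ Metric.infDist lam {z : ℂ | z.im = 0 ∧ z.re ≤ 0}) :
    ∃ C > 0, ∀ t : ℝ, 0 ≤ t → IsUnit (1 + t • A) ∧
      ‖Matrix.toEuclideanCLM (𝕜 := ℝ) (n := Fin d)
          ((1 + t) • ((1 + t • A)⁻¹ * (A - 1)))‖ ≤ C := by
  have hpos : ∀ r ∈ spectrum ℝ A, 0 < r := by
    intro r hr
    by_contra! hr₀
    have hmem : (r : ℂ) ∈ spectrum ℂ (A.map Complex.ofReal) :=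
      (Matrix.map_mem_spectrum_map_iff Complex.ofRealHom A r).mpr hr
    have hdist := hspec _ hmem
    rw [Metric.infDist_zero_of_mem (by simpa using hr₀)] at hdist
    linarith
  obtain ⟨C, hC⟩ := exists_norm_smul_ringInverse_one_add_smul_le hpos
  refine ⟨max (C * ‖A - 1‖) 1, by positivity, fun t ht => ?_⟩
  obtain ⟨hunit, hbound⟩ := hC t ht
  refine ⟨hunit, ?_⟩
  rw [← Matrix.cstar_norm_def, Matrix.nonsing_inv_eq_ringInverse, ← smul_mul_assoc]
  calc _ ≤ ‖(1 + t) • Ring.inverse (1 + t • A)‖ * ‖A - 1‖ := norm_mul_le _ _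
    _ ≤ C * ‖A - 1‖ := by gcongr
    _ ≤ _ := le_max_left _ _

theorem K_uniformly_bounded (d : ℕ) (hd : 1 ≤ d) (A : Matrix (Fin d) (Fin d) ℝ)
    (M ε : ℝ) (hε : 0 < ε)
    (hnorm : ‖Matrix.toEuclideanCLM (𝕜 := ℝ) (n := Fin d) A‖ ≤ M)
    (hspec : ∀ lam ∈ spectrum ℂ (A.map Complex.ofReal),
      ε ≤ Metric.infDist lam {z : ℂ | z.im = 0 ∧ z.re ≤ 0}) :
    ∃ C > 0, ∀ t : ℝ, 0 ≤ t → IsUnit (1 + t • A) ∧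
      ‖Matrix.toEuclideanCLM (𝕜 := ℝ) (n := Fin d)
          ((1 + t) • ((1 + t • A)⁻¹ * (A - 1)))‖ ≤ C :=
  K_uniformly_bounded_general d A ε hε hspec
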